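/- Let n, k ∈ ℤ³ \ {0} with k ≠ n, k₃ ≠ 0, n₃ − k₃ ≠ 0, |k| ≤ N and |n−k| ≤ N, and suppose ω^σ := σ₁·k₃/|k| + σ₂·(n₃−k₃)/|n−k| − σ₃·n₃/|n| is nonzero for all σ ∈ {±1}³. Then |ω^σ| ≥ 3⁻³·2⁻⁴·N⁻¹² for every σ ∈ {±1}³. -/

import Mathlib

/-- Euclidean norm of an integer vector in ℤ³. -/
noncomputable def nrm (v : Fin 3 → ℤ) : ℝ :=
  Real.sqrt (((v 0 : ℝ)) ^ 2 + ((v 1 : ℝ)) ^ 2 + ((v 2 : ℝ)) ^ 2)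

/-- The resonance function ω^σ = σ₁·k₃/|k| + σ₂·(n₃−k₃)/|n−k| − σ₃·n₃/|n|. -/
noncomputable def omg (n k : Fin 3 → ℤ) (σ₁ σ₂ σ₃ : ℝ) : ℝ :=
  σ₁ * (k 2 : ℝ) / nrm k + σ₂ * ((n 2 - k 2 : ℤ) : ℝ) / nrm (n - k)
    - σ₃ * (n 2 : ℝ) / nrm n

/-!
Write `a = k₃/|k|`, `b = (n₃ - k₃)/|n - k|`, `c = n₃/|n|`, so that `ω^σ = σ₁ a + σ₂ b - σ₃ c`.
The product of the four `ω^{σ₁,σ₂,+}` is `(a² + b² - c²)² - 4a²b²`, which only involves the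
squares `a² = k₃²/|k|²`, ...; multiplied by `(|k|²|n-k|²|n|²)² ≤ 16 N¹²` it becomes an integer,
nonzero by hypothesis, so the product is at least `1/(16 N¹²)` in absolute value. Since every
`|ω^σ| ≤ 3`, each single factor is at least `1/(27 · 16 N¹²)`; the case `σ₃ = -1` reduces to
`σ₃ = 1` through `ω^{σ₁,σ₂,-} = -ω^{-σ₁,-σ₂,+}`.
-/

open Finset

lemma abs_prod_le_abs_mul_pow {ι R : Type*} [CommRing R] [LinearOrder R] [IsStrictOrderedRing R]
    [DecidableEq ι] {s : Finset ι} {f : ι → R} {C : R} {i : ι} (hi : i ∈ s)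
    (hC : ∀ j ∈ s, |f j| ≤ C) : |∏ j ∈ s, f j| ≤ |f i| * C ^ (#s - 1) := by
  rw [← mul_prod_erase s f hi, abs_mul, abs_prod, ← card_erase_of_mem hi, ← prod_const]
  gcongr with j hj
  exact hC j (mem_of_mem_erase hj)

lemma four_sign_product_mul_sq_eq {R : Type*} [CommRing R] {a b c K L M p q r : R}
    (hp : a ^ 2 * K = p) (hq : b ^ 2 * L = q) (hr : c ^ 2 * M = r) :
    (a + b - c) * (a - b - c) * (-a + b - c) * (-a - b - c) * (K * L * M) ^ 2
      = (p * L * M + q * K * M - r * K * L) ^ 2 - 4 * p * q * K * L * M ^ 2 := by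
  subst hp hq hr
  ring

def normSq (v : Fin 3 → ℤ) : ℤ := ∑ i, v i ^ 2

lemma nrm_nonneg (v : Fin 3 → ℤ) : 0 ≤ nrm v := Real.sqrt_nonneg _

lemma sq_nrm (v : Fin 3 → ℤ) : nrm v ^ 2 = normSq v := by
  rw [nrm, Real.sq_sqrt (by positivity), normSq]
  push_cast
  simp [Fin.sum_univ_three]

lemma nrm_eq_norm (v : Fin 3 → ℤ) :
    nrm v = ‖(WithLp.toLp 2 (fun i => (v i : ℝ)) : EuclideanSpace ℝ (Fin 3))‖ := by
  simp [nrm, EuclideanSpace.norm_eq, Fin.sum_univ_three]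

lemma nrm_pos {v : Fin 3 → ℤ} (hv : v ≠ 0) : 0 < nrm v := by
  simpa [nrm_eq_norm, funext_iff] using hv

lemma nrm_add_le (v w : Fin 3 → ℤ) : nrm (v + w) ≤ nrm v + nrm w := by
  have h := norm_add_le (WithLp.toLp 2 (fun i => (v i : ℝ)) : EuclideanSpace ℝ (Fin 3))
    (WithLp.toLp 2 (fun i => (w i : ℝ)))
  rw [← WithLp.toLp_add] at h
  simp only [nrm_eq_norm, Pi.add_apply, Int.cast_add]
  exact h

lemma abs_div_nrm_le_one (v : Fin 3 → ℤ) : |(v 2 : ℝ) / nrm v| ≤ 1 := by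
  rw [abs_div, abs_of_nonneg (nrm_nonneg v)]
  exact div_le_one_of_le₀ (Real.abs_le_sqrt (by nlinarith)) (nrm_nonneg v)

lemma div_nrm_sq_mul_normSq (v : Fin 3 → ℤ) :
    ((v 2 : ℝ) / nrm v) ^ 2 * normSq v = (v 2 : ℝ) ^ 2 := by
  rcases eq_or_ne v 0 with rfl | hv
  · simp -- both sides vanish, the left one through `x / 0 = 0`
  · rw [div_pow, ← sq_nrm]
    field_simp [(nrm_pos hv).ne']

lemma omg_eq (n k : Fin 3 → ℤ) (σ₁ σ₂ σ₃ : ℝ) :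
    omg n k σ₁ σ₂ σ₃ = σ₁ * ((k 2 : ℝ) / nrm k) + σ₂ * (((n - k) 2 : ℝ) / nrm (n - k))
      - σ₃ * ((n 2 : ℝ) / nrm n) := by
  simp only [omg, Pi.sub_apply, mul_div_assoc]

lemma omg_neg (n k : Fin 3 → ℤ) (σ₁ σ₂ σ₃ : ℝ) :
    omg n k σ₁ σ₂ (-σ₃) = -omg n k (-σ₁) (-σ₂) σ₃ := by
  simp only [omg]
  ring

lemma abs_omg_le (n k : Fin 3 → ℤ) (σ₁ σ₂ σ₃ : ℝ) :
    |omg n k σ₁ σ₂ σ₃| ≤ |σ₁| + |σ₂| + |σ₃| := by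
  have h (σ : ℝ) (v : Fin 3 → ℤ) : |σ * ((v 2 : ℝ) / nrm v)| ≤ |σ| := by
    rw [abs_mul]
    exact mul_le_of_le_one_right (abs_nonneg σ) (abs_div_nrm_le_one v)
  rw [omg_eq]
  calc _ ≤ |σ₁ * ((k 2 : ℝ) / nrm k)| + |σ₂ * (((n - k) 2 : ℝ) / nrm (n - k))|
        + |σ₃ * ((n 2 : ℝ) / nrm n)| := (abs_sub _ _).trans (by gcongr; exact abs_add_le _ _)
    _ ≤ |σ₁| + |σ₂| + |σ₃| := add_le_add (add_le_add (h σ₁ k) (h σ₂ (n - k))) (h σ₃ n)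

lemma abs_omg_le_three (n k : Fin 3 → ℤ) {σ₁ σ₂ σ₃ : ℝ} (h₁ : σ₁ = 1 ∨ σ₁ = -1)
    (h₂ : σ₂ = 1 ∨ σ₂ = -1) (h₃ : σ₃ = 1 ∨ σ₃ = -1) : |omg n k σ₁ σ₂ σ₃| ≤ 3 := by
  have h := abs_omg_le n k σ₁ σ₂ σ₃
  rwa [(abs_eq zero_le_one).mpr h₁, (abs_eq zero_le_one).mpr h₂, (abs_eq zero_le_one).mpr h₃,
    one_add_one_eq_two, two_add_one_eq_three] at h

noncomputable def signPairs : Finset (ℝ × ℝ) := {1, -1} ×ˢ {1, -1}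

lemma mem_signPairs {s : ℝ × ℝ} :
    s ∈ signPairs ↔ (s.1 = 1 ∨ s.1 = -1) ∧ (s.2 = 1 ∨ s.2 = -1) := by
  simp [signPairs]

lemma card_signPairs : #signPairs = 4 := by
  norm_num [signPairs]

lemma prod_signPairs (f : ℝ → ℝ → ℝ) :
    ∏ s ∈ signPairs, f s.1 s.2 = f 1 1 * f 1 (-1) * f (-1) 1 * f (-1) (-1) := by
  norm_num [signPairs, prod_product]
  ring

def resonanceNumerator (n k : Fin 3 → ℤ) : ℤ :=
  (k 2 ^ 2 * normSq (n - k) * normSq n + (n - k) 2 ^ 2 * normSq k * normSq n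
      - n 2 ^ 2 * normSq k * normSq (n - k)) ^ 2
    - 4 * k 2 ^ 2 * (n - k) 2 ^ 2 * normSq k * normSq (n - k) * normSq n ^ 2

lemma prod_omg_mul_sq_eq (n k : Fin 3 → ℤ) :
    (∏ s ∈ signPairs, omg n k s.1 s.2 1) * ((normSq k * normSq (n - k) * normSq n : ℤ) : ℝ) ^ 2
      = resonanceNumerator n k := by
  rw [prod_signPairs (fun σ₁ σ₂ => omg n k σ₁ σ₂ 1)]
  simp only [omg_eq, one_mul, neg_mul, ← sub_eq_add_neg]
  push_cast [resonanceNumerator]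
  exact four_sign_product_mul_sq_eq (div_nrm_sq_mul_normSq k) (div_nrm_sq_mul_normSq (n - k))
    (div_nrm_sq_mul_normSq n)

lemma normSq_prod_sq_eq (n k : Fin 3 → ℤ) :
    ((normSq k * normSq (n - k) * normSq n : ℤ) : ℝ) ^ 2 = (nrm k * nrm (n - k) * nrm n) ^ 4 := by
  simp only [Int.cast_mul, ← sq_nrm]
  ring

lemma normSq_prod_sq_le {N : ℝ} {n k : Fin 3 → ℤ} (hkN : nrm k ≤ N) (hnkN : nrm (n - k) ≤ N) :
    ((normSq k * normSq (n - k) * normSq n : ℤ) : ℝ) ^ 2 ≤ 16 * N ^ 12 := by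
  have hnN : nrm n ≤ 2 * N := by
    simpa [two_mul] using (nrm_add_le (n - k) k).trans (add_le_add hnkN hkN)
  have := nrm_nonneg k
  have := nrm_nonneg (n - k)
  have := nrm_nonneg n
  have := (nrm_nonneg k).trans hkN
  calc _ = (nrm k * nrm (n - k) * nrm n) ^ 4 := normSq_prod_sq_eq n k
    _ ≤ (N * N * (2 * N)) ^ 4 := by gcongr
    _ = 16 * N ^ 12 := by ring

lemma inv_le_abs_prod_omg {N : ℝ} {n k : Fin 3 → ℤ} (hn : n ≠ 0) (hk : k ≠ 0) (hkn : k ≠ n)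
    (hkN : nrm k ≤ N) (hnkN : nrm (n - k) ≤ N)
    (hP : ∏ s ∈ signPairs, omg n k s.1 s.2 1 ≠ 0) :
    (16 * N ^ 12)⁻¹ ≤ |∏ s ∈ signPairs, omg n k s.1 s.2 1| := by
  set P := ∏ s ∈ signPairs, omg n k s.1 s.2 1
  set D : ℝ := ((normSq k * normSq (n - k) * normSq n : ℤ) : ℝ) ^ 2
  have hD_pos : 0 < D := by
    simp only [D, normSq_prod_sq_eq]
    have := nrm_pos (sub_ne_zero.mpr hkn.symm)
    have := nrm_pos hk
    have := nrm_pos hn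
    positivity
  have hD_le : D ≤ 16 * N ^ 12 := normSq_prod_sq_le hkN hnkN
  have hnum : resonanceNumerator n k ≠ 0 := by
    exact_mod_cast prod_omg_mul_sq_eq n k ▸ mul_ne_zero hP hD_pos.ne'
  rw [inv_le_iff_one_le_mul₀ (hD_pos.trans_le hD_le)]
  calc 1 ≤ |(resonanceNumerator n k : ℝ)| := by exact_mod_cast Int.one_le_abs hnum
    _ = |P| * D := by rw [← prod_omg_mul_sq_eq, abs_mul, abs_of_pos hD_pos]
    _ ≤ |P| * (16 * N ^ 12) := by gcongr

theorem nonresonant_lower_bound_general (N : ℝ) (n k : Fin 3 → ℤ)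
    (hn : n ≠ 0) (hk : k ≠ 0) (hkn : k ≠ n)
    (hkN : nrm k ≤ N) (hnkN : nrm (n - k) ≤ N)
    (hnz : ∀ σ₁ σ₂ σ₃ : ℝ, (σ₁ = 1 ∨ σ₁ = -1) → (σ₂ = 1 ∨ σ₂ = -1) → (σ₃ = 1 ∨ σ₃ = -1) →
      omg n k σ₁ σ₂ σ₃ ≠ 0) :
    ∀ σ₁ σ₂ σ₃ : ℝ, (σ₁ = 1 ∨ σ₁ = -1) → (σ₂ = 1 ∨ σ₂ = -1) → (σ₃ = 1 ∨ σ₃ = -1) →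
      ((3 : ℝ) ^ 3)⁻¹ * ((2 : ℝ) ^ 4)⁻¹ * (N ^ 12)⁻¹ ≤ |omg n k σ₁ σ₂ σ₃| := by
  have hprod := inv_le_abs_prod_omg hn hk hkn hkN hnkN <| prod_ne_zero_iff.mpr fun s hs =>
    hnz _ _ 1 (mem_signPairs.mp hs).1 (mem_signPairs.mp hs).2 (.inl rfl)
  have hσ₃_one (σ₁ σ₂ : ℝ) (h₁ : σ₁ = 1 ∨ σ₁ = -1) (h₂ : σ₂ = 1 ∨ σ₂ = -1) :
      ((3 : ℝ) ^ 3)⁻¹ * ((2 : ℝ) ^ 4)⁻¹ * (N ^ 12)⁻¹ ≤ |omg n k σ₁ σ₂ 1| := by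
    have hle := abs_prod_le_abs_mul_pow (mem_signPairs (s := (σ₁, σ₂)) |>.mpr ⟨h₁, h₂⟩)
      fun s hs => abs_omg_le_three n k (mem_signPairs.mp hs).1 (mem_signPairs.mp hs).2 (.inl rfl)
    rw [card_signPairs] at hle
    calc _ = (16 * N ^ 12)⁻¹ / 3 ^ 3 := by ring
      _ ≤ |omg n k σ₁ σ₂ 1| := div_le_of_le_mul₀ (by norm_num) (abs_nonneg _) (hprod.trans hle)
  intro σ₁ σ₂ σ₃ h₁ h₂ h₃
  rcases h₃ with rfl | rfl
  · exact hσ₃_one σ₁ σ₂ h₁ h₂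
  · rw [omg_neg, abs_neg]
    exact hσ₃_one _ _ (by rcases h₁ with rfl | rfl <;> norm_num)
      (by rcases h₂ with rfl | rfl <;> norm_num)

/-- Quantitative lower bound on nonzero resonance frequencies: if ω^σ ≠ 0 for all signs
σ ∈ {±1}³, then |ω^σ| ≥ 3⁻³·2⁻⁴·N⁻¹² for every σ. -/
theorem nonresonant_lower_bound (N : ℝ) (hN : 1 ≤ N) (n k : Fin 3 → ℤ)
    (hn : n ≠ 0) (hk : k ≠ 0) (hkn : k ≠ n)
    (hk3 : k 2 ≠ 0) (hnk3 : n 2 - k 2 ≠ 0)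
    (hkN : nrm k ≤ N) (hnkN : nrm (n - k) ≤ N)
    (hnz : ∀ σ₁ σ₂ σ₃ : ℝ, (σ₁ = 1 ∨ σ₁ = -1) → (σ₂ = 1 ∨ σ₂ = -1) → (σ₃ = 1 ∨ σ₃ = -1) →
      omg n k σ₁ σ₂ σ₃ ≠ 0) :
    ∀ σ₁ σ₂ σ₃ : ℝ, (σ₁ = 1 ∨ σ₁ = -1) → (σ₂ = 1 ∨ σ₂ = -1) → (σ₃ = 1 ∨ σ₃ = -1) →
      ((3 : ℝ) ^ 3)⁻¹ * ((2 : ℝ) ^ 4)⁻¹ * (N ^ 12)⁻¹ ≤ |omg n k σ₁ σ₂ σ₃| :=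
  nonresonant_lower_bound_general N n k hn hk hkn hkN hnkN hnz
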